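/- arXiv:1409.7408 — 4 statements merged into one kernel-verified Lean document; each statement's English description precedes it below -/
import Mathlib

section
/- Let r = (r_1,...,r_m) be a vector of positive integers with n = Σ r_i, and let Z be an m×n real matrix satisfying: (a) every column of Z sums to 1, (b) the i-th row of Z sums to r_i, and (c) all entries of Z lie in [0,1]. Then Z is a convex combination of multipermutation matrices parameterized by r. Conversely, every convex combination of multipermutation matrices parameterized by r satisfies (a), (b), (c). -/
/-!
Choose `f : Fin n → Fin m` with fibres of sizes `r i`, and let `A = (1).submatrix id f` be its
incidence matrix (column `j` has its single `1` in row `f j`). Splitting row `i` of `Z` into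
`r i` equal copies indexed by the fibre of `i` gives an `n × n` doubly stochastic matrix `D`
with `A * D = Z`. By Birkhoff's theorem `D` is a convex combination of permutation matrices
`P σ`, and `A * P σ` is the incidence matrix of `f ∘ σ⁻¹`, a multipermutation matrix.
Conversely, the three conditions cut out a convex set containing every multipermutation matrix.
-/

open Matrix Finset
open scoped Classical

/-- Multipermutation matrix parameterized by multiplicity vector `r`. -/
def IsMPM {m n : ℕ} (r : Fin m → ℕ) (X : Matrix (Fin m) (Fin n) ℝ) : Prop :=
  (∀ i j, X i j = 0 ∨ X i j = 1) ∧ (∀ j, ∑ i, X i j = 1) ∧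
    (∀ i, ∑ j, X i j = (r i : ℝ))

section

variable {ι κ : Type*}

theorem exists_card_fiber_eq [Fintype ι] [Fintype κ] [DecidableEq ι] (r : ι → ℕ)
    (h : ∑ i, r i = Fintype.card κ) :
    ∃ f : κ → ι, ∀ i, #{k | f k = i} = r i := by
  obtain ⟨e⟩ : Nonempty ((Σ i, Fin (r i)) ≃ κ) :=
    Fintype.card_eq.1 (by simp [h])
  refine ⟨fun k => (e.symm k).1, fun i => ?_⟩
  rw [card_filter, ← e.sum_comp, Fintype.sum_sigma]
  simp

theorem card_fiber_comp_perm [Fintype κ] [DecidableEq ι] (f : κ → ι) (σ : Equiv.Perm κ)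
    (i : ι) :
    #{k | f (σ k) = i} = #{k | f k = i} :=
  card_equiv σ (by simp)

theorem sum_one_submatrix_id_left [Fintype ι] [DecidableEq ι] (f : κ → ι) (j : κ) :
    ∑ i, (1 : Matrix ι ι ℝ).submatrix id f i j = 1 := by
  simp [one_apply]

theorem sum_one_submatrix_id_right [Fintype κ] [DecidableEq ι] (f : κ → ι) (i : ι) :
    ∑ j, (1 : Matrix ι ι ℝ).submatrix id f i j = #{k | f k = i} := by
  simp [one_apply, eq_comm]

noncomputable def splitRows [Fintype κ] [DecidableEq ι] (f : κ → ι) (Z : Matrix ι κ ℝ) :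
    Matrix κ κ ℝ :=
  of fun k j => Z (f k) j / #{k' | f k' = f k}

theorem sum_fiber_splitRows [Fintype κ] [DecidableEq ι] (f : κ → ι) {Z : Matrix ι κ ℝ}
    (h0 : ∀ i j, 0 ≤ Z i j) (hrow : ∀ i, ∑ j, Z i j = #{k | f k = i}) (i : ι) (j : κ) :
    ∑ k with f k = i, splitRows f Z k j = Z i j := by
  rcases eq_or_ne #{k | f k = i} 0 with hempty | hne
  -- an empty fibre forces a zero row of `Z`, its entries being nonnegative with sum `0`
  · have hZ : Z i j = 0 :=
      (sum_eq_zero_iff_of_nonneg fun j _ => h0 i j).1 (by simp [hrow, hempty]) j (mem_univ j)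
    simp [card_eq_zero.1 hempty, hZ]
  · rw [sum_congr rfl fun k hk => by rw [splitRows, of_apply, (mem_filter.1 hk).2], sum_const,
      nsmul_eq_mul, mul_div_cancel₀ _ (Nat.cast_ne_zero.2 hne)]

theorem splitRows_mem_doublyStochastic [Fintype ι] [Fintype κ] [DecidableEq ι] (f : κ → ι)
    {Z : Matrix ι κ ℝ} (h0 : ∀ i j, 0 ≤ Z i j) (hcol : ∀ j, ∑ i, Z i j = 1)
    (hrow : ∀ i, ∑ j, Z i j = #{k | f k = i}) :
    splitRows f Z ∈ doublyStochastic ℝ κ := by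
  have hfiber : ∀ k, (#{k' | f k' = f k} : ℝ) ≠ 0 := fun k => by
    exact_mod_cast (card_pos.2 ⟨k, by simp⟩).ne'
  rw [mem_doublyStochastic_iff_sum]
  refine ⟨fun k j => div_nonneg (h0 _ _) (Nat.cast_nonneg _), fun k => ?_, fun j => ?_⟩
  · simp only [splitRows, of_apply, ← sum_div, hrow, div_self (hfiber k)]
  · rw [← hcol j, ← sum_fiberwise univ f]
    exact sum_congr rfl fun i _ => sum_fiber_splitRows f h0 hrow i j

theorem one_submatrix_mul_splitRows [Fintype κ] [DecidableEq ι] (f : κ → ι)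
    {Z : Matrix ι κ ℝ} (h0 : ∀ i j, 0 ≤ Z i j)
    (hrow : ∀ i, ∑ j, Z i j = #{k | f k = i}) :
    (1 : Matrix ι ι ℝ).submatrix id f * splitRows f Z = Z := by
  ext i j
  rw [← sum_fiber_splitRows f h0 hrow i j, mul_apply, sum_filter]
  simp [one_apply, eq_comm]

theorem mem_convexHull_one_submatrix_comp_perm [Fintype ι] [Fintype κ] [DecidableEq ι]
    (f : κ → ι) {Z : Matrix ι κ ℝ} (h0 : ∀ i j, 0 ≤ Z i j)
    (hcol : ∀ j, ∑ i, Z i j = 1) (hrow : ∀ i, ∑ j, Z i j = #{k | f k = i}) :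
    Z ∈ convexHull ℝ {(1 : Matrix ι ι ℝ).submatrix id (f ∘ σ) | σ : Equiv.Perm κ} := by
  have hD := splitRows_mem_doublyStochastic f h0 hcol hrow
  rw [← SetLike.mem_coe, doublyStochastic_eq_convexHull_permMatrix] at hD
  have hZ :=
    Set.mem_image_of_mem (mulLeftLinearMap κ ℝ ((1 : Matrix ι ι ℝ).submatrix id f)) hD
  rw [LinearMap.image_convexHull, mulLeftLinearMap_apply,
    one_submatrix_mul_splitRows f h0 hrow] at hZ
  refine convexHull_mono ?_ hZ
  rintro _ ⟨_, ⟨σ, rfl⟩, rfl⟩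
  exact ⟨σ.symm, by simp [PEquiv.toMatrix_toPEquiv_eq, mul_submatrix_one]⟩

theorem convex_setOf_sum_eq_of_mem_Icc [Fintype ι] [Fintype κ] (r : ι → ℝ) :
    Convex ℝ {Z : Matrix ι κ ℝ | (∀ j, ∑ i, Z i j = 1) ∧ (∀ i, ∑ j, Z i j = r i) ∧
      ∀ i j, Z i j ∈ Set.Icc (0 : ℝ) 1} := by
  rintro X ⟨hX1, hX2, hX3⟩ Y ⟨hY1, hY2, hY3⟩ a b ha hb hab
  refine ⟨fun j => ?_, fun i => ?_, fun i j => ?_⟩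
  · simp [sum_add_distrib, ← mul_sum, hX1, hY1, hab]
  · simp [sum_add_distrib, ← mul_sum, hX2, hY2, ← add_mul, hab]
  · simpa using convex_Icc (0 : ℝ) 1 (hX3 i j) (hY3 i j) ha hb hab

end

theorem isMPM_one_submatrix {m n : ℕ} (r : Fin m → ℕ) {f : Fin n → Fin m}
    (hf : ∀ i, #{k | f k = i} = r i) :
    IsMPM r ((1 : Matrix (Fin m) (Fin m) ℝ).submatrix id f) :=
  ⟨fun i j => by simp [one_apply, em'], sum_one_submatrix_id_left f,
    fun i => by rw [sum_one_submatrix_id_right, hf]⟩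

theorem stmt_5_general {m n : ℕ} (r : Fin m → ℕ) (hn : ∑ i, r i = n)
    (Z : Matrix (Fin m) (Fin n) ℝ) :
    ((∀ j, ∑ i, Z i j = 1) ∧ (∀ i, ∑ j, Z i j = (r i : ℝ)) ∧
        (∀ i j, Z i j ∈ Set.Icc (0 : ℝ) 1)) ↔
      Z ∈ convexHull ℝ {X : Matrix (Fin m) (Fin n) ℝ | IsMPM r X} := by
  constructor
  · rintro ⟨hcol, hrow, hbox⟩
    obtain ⟨f, hf⟩ := exists_card_fiber_eq (κ := Fin n) r (by simpa using hn)
    refine convexHull_mono ?_ <|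
      mem_convexHull_one_submatrix_comp_perm f (fun i j => (hbox i j).1) hcol (by simpa [hf])
    rintro _ ⟨σ, rfl⟩
    exact isMPM_one_submatrix r (f := f ∘ σ) fun i => (card_fiber_comp_perm f σ i).trans (hf i)
  · refine fun hZ => convexHull_min ?_ (convex_setOf_sum_eq_of_mem_Icc _) hZ
    rintro X ⟨h01, hcol, hrow⟩
    exact ⟨hcol, hrow, fun i j => by rcases h01 i j with h | h <;> simp [h]⟩

theorem stmt_5 {m n : ℕ} (r : Fin m → ℕ) (hr : ∀ i, 0 < r i) (hn : ∑ i, r i = n)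
    (Z : Matrix (Fin m) (Fin n) ℝ) :
    ((∀ j, ∑ i, Z i j = 1) ∧ (∀ i, ∑ j, Z i j = (r i : ℝ)) ∧
        (∀ i j, Z i j ∈ Set.Icc (0 : ℝ) 1)) ↔
      Z ∈ convexHull ℝ {X : Matrix (Fin m) (Fin n) ℝ | IsMPM r X} :=
  stmt_5_general r hn Z
end

section
/- Let s ∈ R^n be obtained from t ∈ R^m (with distinct entries) by repeating t_i exactly r_i times (s_j = t_i for j in the block I_i). Then for every multipermutation matrix X parameterized by r there exists an n×n permutation matrix P such that s·P = t·X, and conversely for every permutation matrix P the vector s·P equals t·X for the multipermutation matrix X given by X_{ij} = Σ_{k∈I_i} P_{kj}. -/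
/-!
Identify `Fin n` with `Σ i, Fin (r i)` through `finSigmaFinEquiv`, so that `s = t ∘ blockIndex`.
A 0-1 matrix with unit column sums is `1.submatrix id f`, where `f` sends a column to the row of
its `1`, and `t ᵥ* 1.submatrix id f = t ∘ f`. For a multipermutation matrix the fibres of `f`
have the sizes `r i` of the blocks, so `f = blockIndex ∘ e` for a permutation `e`, and
`P = 1.submatrix id e` works. Conversely, the matrix built from `P` is
`1.submatrix id blockIndex * P`, whence `t ᵥ* X = (t ∘ blockIndex) ᵥ* P = s ᵥ* P`.
-/

open Matrix Finset
open scoped Classical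

/-- Permutation matrix: binary with all row and column sums equal to 1. -/
def IsPermMatrix {n : ℕ} (P : Matrix (Fin n) (Fin n) ℝ) : Prop :=
  (∀ i j, P i j = 0 ∨ P i j = 1) ∧ (∀ j, ∑ i, P i j = 1) ∧ (∀ i, ∑ j, P i j = 1)

/-- `k` (a 0-based index) lies in the `i`-th consecutive block of sizes `r 0, r 1, ...`. -/
def InBlock {m : ℕ} (r : Fin m → ℕ) (i : Fin m) (k : ℕ) : Prop :=
  ∑ l ∈ Finset.Iio i, r l ≤ k ∧ k < (∑ l ∈ Finset.Iio i, r l) + r i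

section OneSubmatrix

variable {ι κ R : Type*} [DecidableEq ι]

lemma vecMul_one_submatrix_id [Fintype ι] [NonAssocSemiring R] (v : ι → R) (f : κ → ι) :
    v ᵥ* (1 : Matrix ι ι R).submatrix id f = v ∘ f := by
  ext j
  simp [vecMul, dotProduct, one_apply]

lemma one_submatrix_id_mul_apply [Fintype κ] [NonAssocSemiring R] {μ : Type*}
    (g : κ → ι) (P : Matrix κ μ R) (i : ι) (j : μ) :
    ((1 : Matrix ι ι R).submatrix id g * P) i j = ∑ k with g k = i, P k j := by
  simp [mul_apply, one_apply, Finset.sum_ite, eq_comm]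

lemma exists_eq_ite_of_sum_eq_one [Fintype ι] [NonAssocSemiring R] [CharZero R] {v : ι → R}
    (hv : ∀ i, v i = 0 ∨ v i = 1) (hsum : ∑ i, v i = 1) :
    ∃ i₀, ∀ i, v i = if i = i₀ then 1 else 0 := by
  have hcard : #{i | v i = 1} = 1 := by
    have : ∑ i, v i = ∑ i, if v i = 1 then (1 : R) else 0 :=
      sum_congr rfl fun i _ => by rcases hv i with h | h <;> simp [h]
    rwa [this, sum_boole, Nat.cast_eq_one] at hsum
  obtain ⟨i₀, hi₀⟩ := card_eq_one.1 hcard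
  refine ⟨i₀, fun i => ?_⟩
  have : v i = 1 ↔ i = i₀ := by simpa using congrArg (i ∈ ·) hi₀
  split_ifs with h
  · exact this.2 h
  · exact (hv i).resolve_right (mt this.1 h)

end OneSubmatrix

lemma isPermMatrix_one_submatrix_id {n : ℕ} (e : Fin n ≃ Fin n) :
    IsPermMatrix ((1 : Matrix (Fin n) (Fin n) ℝ).submatrix id e) := by
  refine ⟨fun i j => ?_, fun j => ?_, fun i => ?_⟩
  · by_cases h : i = e j <;> simp [one_apply, h]
  · simp [one_apply]
  · simp [one_apply, ← e.symm_apply_eq]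

lemma IsMPM.exists_eq_one_submatrix_id {m n : ℕ} {r : Fin m → ℕ} {X : Matrix (Fin m) (Fin n) ℝ}
    (hX : IsMPM r X) :
    ∃ f : Fin n → Fin m, X = (1 : Matrix (Fin m) (Fin m) ℝ).submatrix id f ∧
      ∀ i, Fintype.card {j // f j = i} = r i := by
  obtain ⟨hbin, hcol, hrow⟩ := hX
  choose f hf using fun j => exists_eq_ite_of_sum_eq_one (fun i => hbin i j) (hcol j)
  have hXf : X = (1 : Matrix (Fin m) (Fin m) ℝ).submatrix id f := by
    ext i j
    exact hf j i
  refine ⟨f, hXf, fun i => ?_⟩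
  have hfib : ((#{j | f j = i} : ℕ) : ℝ) = r i := by
    simpa [hXf, one_apply, eq_comm] using hrow i
  rw [Fintype.card_subtype]
  exact_mod_cast hfib

lemma Fin.sum_univ_castLE_eq_sum_Iio {M : Type*} [AddCommMonoid M] {m : ℕ} (f : Fin m → M)
    (i : Fin m) : ∑ l : Fin i, f (Fin.castLE i.2.le l) = ∑ l ∈ Iio i, f l := by
  have : (univ : Finset (Fin i)).map (Fin.castLEEmb i.2.le) = Iio i := by
    ext l
    simp only [mem_map, mem_univ, true_and, mem_Iio, Fin.coe_castLEEmb]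
    exact ⟨fun ⟨a, ha⟩ => ha ▸ a.2, fun h => ⟨⟨l, h⟩, rfl⟩⟩
  rw [← this, sum_map]
  rfl

section Blocks

variable {m n : ℕ} (r : Fin m → ℕ) (hn : ∑ i, r i = n)

def blockEquiv : (Σ i, Fin (r i)) ≃ Fin n := finSigmaFinEquiv.trans (finCongr hn)

def blockIndex (k : Fin n) : Fin m := ((blockEquiv r hn).symm k).1

lemma blockEquiv_val (x : Σ i, Fin (r i)) :
    (blockEquiv r hn x : ℕ) = ∑ l ∈ Iio x.1, r l + x.2 := by
  simp [blockEquiv, Fin.sum_univ_castLE_eq_sum_Iio]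

lemma inBlock_iff_blockIndex_eq {i : Fin m} {k : Fin n} :
    InBlock r i k ↔ blockIndex r hn k = i := by
  constructor
  · rintro ⟨hlo, hhi⟩
    have hk : blockEquiv r hn ⟨i, ⟨k - ∑ l ∈ Iio i, r l, by omega⟩⟩ = k :=
      Fin.ext (by rw [blockEquiv_val]; dsimp only; omega)
    rw [blockIndex, ← hk, Equiv.symm_apply_apply]
  · rintro rfl
    have := blockEquiv_val r hn ((blockEquiv r hn).symm k)
    rw [Equiv.apply_symm_apply] at this
    exact ⟨by unfold blockIndex; omega, by unfold blockIndex; omega⟩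

lemma exists_equiv_blockIndex_comp {f : Fin n → Fin m}
    (hf : ∀ i, Fintype.card {j // f j = i} = r i) :
    ∃ e : Fin n ≃ Fin n, ∀ j, blockIndex r hn (e j) = f j := by
  let φ i : {j // f j = i} ≃ Fin (r i) := Fintype.equivFinOfCardEq (hf i)
  refine ⟨(Equiv.sigmaFiberEquiv f).symm.trans ((Equiv.sigmaCongrRight φ).trans (blockEquiv r hn)),
    fun j => ?_⟩
  simp [blockIndex]

end Blocks

theorem stmt_12_general {m n : ℕ} (r : Fin m → ℕ) (hn : ∑ i, r i = n)
    (t : Fin m → ℝ) (s : Fin n → ℝ) (hs : ∀ (i : Fin m) (k : Fin n), InBlock r i k.val → s k = t i) :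
    (∀ X : Matrix (Fin m) (Fin n) ℝ, IsMPM r X →
        ∃ P : Matrix (Fin n) (Fin n) ℝ, IsPermMatrix P ∧ s ᵥ* P = t ᵥ* X) ∧
      (∀ P : Matrix (Fin n) (Fin n) ℝ, IsPermMatrix P →
        s ᵥ* P = t ᵥ* (Matrix.of fun i j =>
          ∑ k ∈ Finset.univ.filter (fun k : Fin n => InBlock r i k.val), P k j)) := by
  have hst : s = t ∘ blockIndex r hn :=
    funext fun k => hs _ k ((inBlock_iff_blockIndex_eq r hn).2 rfl)
  refine ⟨fun X hX => ?_, fun P _ => ?_⟩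
  · obtain ⟨f, rfl, hf⟩ := hX.exists_eq_one_submatrix_id
    obtain ⟨e, he⟩ := exists_equiv_blockIndex_comp r hn hf
    refine ⟨(1 : Matrix _ _ ℝ).submatrix id e, isPermMatrix_one_submatrix_id e, ?_⟩
    rw [vecMul_one_submatrix_id, vecMul_one_submatrix_id, hst]
    exact funext fun j => congrArg t (he j)
  · have hX : (Matrix.of fun i j => ∑ k ∈ univ.filter (fun k : Fin n => InBlock r i k.val), P k j)
        = (1 : Matrix _ _ ℝ).submatrix id (blockIndex r hn) * P := by
      ext i j
      simp only [of_apply, one_submatrix_id_mul_apply, inBlock_iff_blockIndex_eq r hn]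
    rw [hX, ← vecMul_vecMul, vecMul_one_submatrix_id, hst]

theorem stmt_12 {m n : ℕ} (r : Fin m → ℕ) (hr : ∀ i, 0 < r i) (hn : ∑ i, r i = n)
    (t : Fin m → ℝ) (ht : Function.Injective t)
    (s : Fin n → ℝ) (hs : ∀ (i : Fin m) (k : Fin n), InBlock r i k.val → s k = t i) :
    (∀ X : Matrix (Fin m) (Fin n) ℝ, IsMPM r X →
        ∃ P : Matrix (Fin n) (Fin n) ℝ, IsPermMatrix P ∧ s ᵥ* P = t ᵥ* X) ∧
      (∀ P : Matrix (Fin n) (Fin n) ℝ, IsPermMatrix P →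
        s ᵥ* P = t ᵥ* (Matrix.of fun i j =>
          ∑ k ∈ Finset.univ.filter (fun k : Fin n => InBlock r i k.val), P k j)) :=
  stmt_12_general r hn t s hs
end

section
/- For distinct multipermutation matrices X and Y parameterized by r, tr(Xᵀ(E − Y)) ≥ 2, where E is the m×n all-ones matrix; and tr(Xᵀ(E − Y)) = 0 if and only if X = Y. -/
/-!
Every column of a multipermutation matrix is a standard basis vector, so `X` and `Y` are the
0-1 matrices of maps `σ τ : Fin n → Fin m`, and `tr (Xᵀ (E - Y))` counts the columns `j` with
`σ j ≠ τ j`. The row sums say that `σ` and `τ` have fibres of the same sizes, and two such maps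
cannot differ in exactly one place: changing the value at a single point moves one element
from one fibre to another.
-/

open Matrix Finset
open scoped Classical

def funMatrix {ι κ : Type*} [DecidableEq ι] (σ : κ → ι) : Matrix ι κ ℝ :=
  Matrix.of fun i j => if σ j = i then 1 else 0

theorem funMatrix_injective {ι κ : Type*} [DecidableEq ι] :
    Function.Injective (funMatrix : (κ → ι) → Matrix ι κ ℝ) := by
  intro σ τ h
  funext j
  simpa [funMatrix] using congrFun (congrFun h (τ j)) j

theorem IsMPM.exists_eq_funMatrix {m n : ℕ} {r : Fin m → ℕ} {X : Matrix (Fin m) (Fin n) ℝ}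
    (hX : IsMPM r X) : ∃ σ, X = funMatrix σ := by
  obtain ⟨h01, hcol, -⟩ := hX
  have hcard : ∀ j, #{i | X i j = 1} = 1 := fun j => by
    have hsum : ∑ i, X i j = #{i | X i j = 1} := by
      rw [← sum_boole]
      refine sum_congr rfl fun i _ => ?_
      rcases h01 i j with h | h <;> simp [h]
    exact_mod_cast hsum ▸ hcol j
  choose σ hσ using fun j => card_eq_one.mp (hcard j)
  refine ⟨σ, ext fun i j => ?_⟩
  have hone : X i j = 1 ↔ i = σ j := by simpa using Finset.ext_iff.mp (hσ j) i
  rcases h01 i j with h | h <;> simp_all [funMatrix, eq_comm]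

theorem sum_row_funMatrix {ι κ : Type*} [DecidableEq ι] [Fintype κ] (σ : κ → ι) (i : ι) :
    ∑ j, funMatrix σ i j = #{j | σ j = i} := by
  simp [funMatrix, sum_boole]

theorem trace_transpose_funMatrix_mul_ones_sub {ι κ : Type*} [DecidableEq ι] [Fintype ι]
    [Fintype κ] (σ τ : κ → ι) :
    trace ((funMatrix σ)ᵀ * (Matrix.of (fun _ _ => (1 : ℝ)) - funMatrix τ)) =
      (#{j | σ j ≠ τ j} : ℝ) := by
  have hterm : ∀ j, ∑ i, funMatrix σ i j * (1 - funMatrix τ i j) = if σ j ≠ τ j then 1 else 0 :=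
    fun j => by split_ifs <;> simp_all [funMatrix, eq_comm]
  simp only [trace, diag_apply, mul_apply, transpose_apply, Matrix.sub_apply, of_apply]
  rw [sum_congr rfl fun j _ => hterm j, sum_boole]

theorem card_filter_ne_ne_one {α β : Type*} [Fintype α] [DecidableEq β] {σ τ : α → β}
    (hfib : ∀ b, #{a | σ a = b} = #{a | τ a = b}) : #{a | σ a ≠ τ a} ≠ 1 := by
  intro h
  obtain ⟨a₀, ha₀⟩ := card_eq_one.mp h
  have hagree : ∀ a ≠ a₀, σ a = τ a := fun a ha => by
    by_contra hne
    exact ha (mem_singleton.mp (ha₀ ▸ mem_filter.mpr ⟨mem_univ a, hne⟩))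
  have hdiff : σ a₀ ≠ τ a₀ := by
    have : a₀ ∈ ({a | σ a ≠ τ a} : Finset α) := ha₀ ▸ mem_singleton_self a₀
    simpa using this
  have hfiber : univ.filter (fun a => σ a = σ a₀) =
      insert a₀ (univ.filter fun a => τ a = σ a₀) := by
    ext a
    by_cases ha : a = a₀
    · simp [ha]
    · simp [ha, hagree a ha]
  have := hfib (σ a₀)
  rw [hfiber, card_insert_of_notMem (by simpa using hdiff.symm)] at this
  omega

theorem stmt_15 {m n : ℕ} (r : Fin m → ℕ)
    (X Y : Matrix (Fin m) (Fin n) ℝ) (hX : IsMPM r X) (hY : IsMPM r Y)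
    (E : Matrix (Fin m) (Fin n) ℝ) (hE : ∀ i j, E i j = 1) :
    (X ≠ Y → 2 ≤ Matrix.trace (Xᵀ * (E - Y))) ∧
      (Matrix.trace (Xᵀ * (E - Y)) = 0 ↔ X = Y) := by
  obtain ⟨σ, rfl⟩ := hX.exists_eq_funMatrix
  obtain ⟨τ, rfl⟩ := hY.exists_eq_funMatrix
  obtain rfl : E = Matrix.of fun _ _ => 1 := ext fun i j => hE i j
  have hfib : ∀ i, #{j | σ j = i} = #{j | τ j = i} := fun i => by
    have := (hX.2.2 i).trans (hY.2.2 i).symm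
    rwa [sum_row_funMatrix, sum_row_funMatrix, Nat.cast_inj] at this
  have hzero : #{j | σ j ≠ τ j} = 0 ↔ σ = τ := by
    simp [card_eq_zero, filter_eq_empty_iff, funext_iff]
  rw [trace_transpose_funMatrix_mul_ones_sub, funMatrix_injective.eq_iff, ne_eq,
    funMatrix_injective.eq_iff, ← hzero, Nat.cast_eq_zero]
  have hne_one := card_filter_ne_ne_one hfib
  exact ⟨fun hne => by exact_mod_cast (by omega : 2 ≤ #{j | σ j ≠ τ j}), Iff.rfl⟩
end

section
/- Let t ∈ R^m have distinct entries and let Y be the m×n indicator matrix of a received word y ∈ {1,...,m}^n (Y_{ij} = 1 iff y_j = i, identifying t_i with symbol i). For any multipermutation matrix X parameterized by r with x = t·X, tr(Yᵀ X) = n − d_H(x, y), where d_H is the Hamming distance between the vectors x and t·Y. -/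
/-!
A multipermutation matrix has exactly one `1` in each column, so it is the indicator matrix of a
map `σ : Fin n → Fin m`, just as `Y` is that of `y`. For indicator matrices, `t ᵥ* X = t ∘ σ` and
`tr (Yᵀ X)` counts the positions where `σ` and `y` agree. Since `t` is injective, `t ∘ σ` and
`t ∘ y` agree exactly at those positions, so the trace is `n` minus the Hamming distance.
-/

open Matrix Finset
open scoped Classical

variable {R ι κ : Type*} [DecidableEq ι]

def indicatorMatrix [Zero R] [One R] (σ : κ → ι) : Matrix ι κ R :=
  Matrix.of fun i j => if σ j = i then 1 else 0

lemma vecMul_indicatorMatrix [Fintype ι] [NonAssocSemiring R] (t : ι → R) (σ : κ → ι) :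
    t ᵥ* indicatorMatrix σ = t ∘ σ := by
  ext j
  simp [vecMul, dotProduct, indicatorMatrix]

lemma trace_transpose_indicatorMatrix_mul [Fintype ι] [Fintype κ] [NonAssocSemiring R]
    [DecidableEq κ] (τ σ : κ → ι) :
    -- without the second ascription, `*` elaborates through the `CStarMatrix` instance
    trace ((indicatorMatrix τ : Matrix ι κ R)ᵀ * (indicatorMatrix σ : Matrix ι κ R)) =
      (#{j | σ j = τ j} : R) := by
  rw [trace, ← sum_boole]
  refine sum_congr rfl fun j _ => ?_
  simp [mul_apply, indicatorMatrix, eq_comm]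

lemma exists_eq_pi_single_of_sum_eq_one [Fintype ι] [AddCommMonoidWithOne R] [CharZero R]
    {v : ι → R} (h01 : ∀ i, v i = 0 ∨ v i = 1) (hsum : ∑ i, v i = 1) :
    ∃ i, v = Pi.single i 1 := by
  have hv : ∀ k, v k = if v k = 1 then 1 else 0 := fun k => by
    rcases h01 k with h | h <;> simp [h]
  rw [Fintype.sum_congr _ _ hv, sum_boole, Nat.cast_eq_one, card_eq_one] at hsum
  obtain ⟨i, hi⟩ := hsum
  have hvk : ∀ k, v k = 1 ↔ k = i := fun k => by
    simpa using congrArg (k ∈ ·) hi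
  exact ⟨i, funext fun k => by rw [hv k]; simp [Pi.single_apply, hvk]⟩

lemma IsMPM.exists_eq_indicatorMatrix {m n : ℕ} {r : Fin m → ℕ}
    {X : Matrix (Fin m) (Fin n) ℝ} (hX : IsMPM r X) :
    ∃ σ : Fin n → Fin m, X = indicatorMatrix σ := by
  choose σ hσ using fun j => exists_eq_pi_single_of_sum_eq_one (hX.1 · j) (hX.2.1 j)
  refine ⟨σ, ext fun i j => ?_⟩
  rw [congrFun (hσ j) i, Pi.single_apply]
  simp [indicatorMatrix, eq_comm]

theorem stmt_19 {m n : ℕ} (r : Fin m → ℕ)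
    (t : Fin m → ℝ) (ht : Function.Injective t)
    (y : Fin n → Fin m) (Y : Matrix (Fin m) (Fin n) ℝ)
    (hY : ∀ i j, Y i j = if y j = i then 1 else 0)
    (X : Matrix (Fin m) (Fin n) ℝ) (hX : IsMPM r X) :
    Matrix.trace (Yᵀ * X) =
      (n : ℝ) - ((Finset.univ.filter fun j => (t ᵥ* X) j ≠ (t ᵥ* Y) j).card : ℝ) := by
  obtain ⟨σ, rfl⟩ := hX.exists_eq_indicatorMatrix
  obtain rfl : Y = indicatorMatrix y := ext hY
  rw [trace_transpose_indicatorMatrix_mul, vecMul_indicatorMatrix, vecMul_indicatorMatrix]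
  simp only [Function.comp_apply, ht.ne_iff]
  rw [eq_sub_iff_add_eq, ← Nat.cast_add, card_filter_add_card_filter_not, card_univ,
    Fintype.card_fin]
end
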